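/- Given a tree decomposition (T, {B_u}) of the underlying graph G_↓ of a temporal graph 𝒢 with lifetime τ, the family (T, {B_u × [τ]}) obtained by replacing each vertex v in each bag by all pairs (v,1),…,(v,τ) is a valid tree decomposition of the undirected static expansion of 𝒢, of width (width(T, {B_u}) + 1)·τ − 1. -/

import Mathlib

/-- A tree decomposition of a simple graph `G`: a tree `T` with bags `B_u ⊆ V` such that
the bags cover all vertices, every edge is contained in some bag, and for each vertex the
set of tree nodes whose bag contains it induces a connected subtree. -/
structure TreeDecomp {V : Type} (G : SimpleGraph V) : Type 1 where
  ι : Type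
  T : SimpleGraph ι
  isTree : T.IsTree
  bags : ι → Set V
  bags_cover : ∀ v : V, ∃ i, v ∈ bags i
  bags_edge : ∀ ⦃v w : V⦄, G.Adj v w → ∃ i, v ∈ bags i ∧ w ∈ bags i
  bags_subtree : ∀ v : V, (SimpleGraph.induce {i | v ∈ bags i} T).Connected

/-- The width of a tree decomposition: the supremum of bag sizes minus one. -/
noncomputable def TreeDecomp.width {V : Type} {G : SimpleGraph V} (d : TreeDecomp G) : ℕ∞ :=
  ⨆ i, ((d.bags i).encard - 1)

/-- The treewidth of a graph: the minimum width over all tree decompositions. -/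
noncomputable def treewidth {V : Type} (G : SimpleGraph V) : ℕ∞ :=
  ⨅ d : TreeDecomp G, d.width

/-- The underlying graph of a temporal graph given by its layers: the union of all layers. -/
def underlying {V : Type} {τ : ℕ} (layers : Fin τ → SimpleGraph V) : SimpleGraph V :=
  ⨆ i, layers i

/-- The undirected static expansion of a temporal graph: vertices are vertex appearances
`(v, t)`, with layer edges `{(v,t),(w,t)}` for each temporal edge `({v,w},t)` and column
edges `{(v,t),(v,t+1)}`. -/
def expansion {V : Type} {τ : ℕ} (layers : Fin τ → SimpleGraph V) :
    SimpleGraph (V × Fin τ) :=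
  SimpleGraph.fromRel (fun p q =>
    (p.2 = q.2 ∧ (layers p.2).Adj p.1 q.1) ∨ (p.1 = q.1 ∧ (p.2 : ℕ) + 1 = (q.2 : ℕ)))

/-! The blown-up family is the pullback of the given decomposition along the projection
`(v, t) ↦ v`: this map sends every edge of the expansion either to an edge of the underlying
graph or to a single vertex, which is all a pullback of a tree decomposition needs. Each bag
becomes `B_u × [τ]`, so every bag size is multiplied by `τ`, and the width formula follows
because `x ↦ x * τ - 1` commutes with suprema in `ℕ∞`. -/

namespace ENat

variable {ι : Type*}

theorem iSup_sub (f : ι → ℕ∞) (a : ℕ∞) : (⨆ i, f i) - a = ⨆ i, (f i - a) :=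
  le_antisymm (tsub_le_iff_right.2 <| iSup_le fun i => tsub_le_iff_right.1 <| le_iSup (f · - a) i)
    (iSup_le fun _ => tsub_le_tsub (le_iSup _ _) le_rfl)

theorem iSup_sub_one_add_one {f : ι → ℕ∞} (h : ∃ i, f i ≠ 0) :
    (⨆ i, (f i - 1)) + 1 = ⨆ i, f i := by
  obtain ⟨j, hj⟩ := h
  have : Nonempty ι := ⟨j⟩
  rw [iSup_add]
  refine le_antisymm (iSup_le fun i => ?_) (iSup_mono fun i => le_tsub_add)
  rcases eq_or_ne (f i) 0 with hi | hi
  · rw [hi, zero_tsub, zero_add]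
    exact (Order.one_le_iff_ne_zero.2 hj).trans (le_iSup f j)
  · rw [tsub_add_cancel_of_le (Order.one_le_iff_ne_zero.2 hi)]
    exact le_iSup f i

end ENat

namespace TreeDecomp

variable {V W : Type} {G : SimpleGraph V} {H : SimpleGraph W}

def comap (d : TreeDecomp G) (f : W → V)
    (hf : ∀ ⦃x y⦄, H.Adj x y → f x = f y ∨ G.Adj (f x) (f y)) : TreeDecomp H where
  ι := d.ι
  T := d.T
  isTree := d.isTree
  bags i := f ⁻¹' d.bags i
  bags_cover x := d.bags_cover (f x)
  bags_edge x y hxy := by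
    rcases hf hxy with heq | hadj
    · obtain ⟨i, hi⟩ := d.bags_cover (f x)
      exact ⟨i, hi, show f y ∈ d.bags i from heq ▸ hi⟩
    · exact d.bags_edge hadj
  bags_subtree x := d.bags_subtree (f x)

theorem width_add_one [Nonempty V] (d : TreeDecomp G) :
    d.width + 1 = ⨆ i, (d.bags i).encard := by
  obtain ⟨i, hi⟩ := d.bags_cover (Classical.arbitrary V)
  exact ENat.iSup_sub_one_add_one ⟨i, Set.encard_ne_zero.2 ⟨_, hi⟩⟩

theorem width_comap_fst [Nonempty V] {α : Type} {H : SimpleGraph (V × α)} (d : TreeDecomp G)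
    (hf : ∀ ⦃x y⦄, H.Adj x y → x.1 = y.1 ∨ G.Adj x.1 y.1) :
    (d.comap Prod.fst hf).width = (d.width + 1) * ENat.card α - 1 := by
  have hbag : ∀ i, (Prod.fst ⁻¹' d.bags i : Set (V × α)) = d.bags i ×ˢ Set.univ := fun i => by
    ext; simp
  simp only [width, comap, hbag, Set.encard_prod, Set.encard_univ]
  rw [← ENat.iSup_sub, ← ENat.iSup_mul, ← width_add_one]
  rfl

end TreeDecomp

theorem fst_eq_or_underlying_adj_of_expansion_adj {V : Type} {τ : ℕ}
    (layers : Fin τ → SimpleGraph V) ⦃p q : V × Fin τ⦄ (h : (expansion layers).Adj p q) :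
    p.1 = q.1 ∨ (underlying layers).Adj p.1 q.1 := by
  have hle (t : Fin τ) : layers t ≤ underlying layers := le_iSup layers t
  rw [expansion, SimpleGraph.fromRel_adj] at h
  obtain ⟨-, (⟨-, hpq⟩ | ⟨hpq, -⟩) | (⟨-, hqp⟩ | ⟨hqp, -⟩)⟩ := h
  · exact .inr (hle _ hpq)
  · exact .inl hpq
  · exact .inr (hle _ hqp).symm
  · exact .inl hqp.symm

theorem blowup_is_tree_decomposition_of_expansion_general {V : Type} [Nonempty V] {τ : ℕ}
    (layers : Fin τ → SimpleGraph V)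
    (d : TreeDecomp (underlying layers)) :
    (∀ p : V × Fin τ, ∃ u, p ∈ {q : V × Fin τ | q.1 ∈ d.bags u}) ∧
    (∀ p q : V × Fin τ, (expansion layers).Adj p q →
        ∃ u, p ∈ {r : V × Fin τ | r.1 ∈ d.bags u} ∧ q ∈ {r : V × Fin τ | r.1 ∈ d.bags u}) ∧
    (∀ p : V × Fin τ,
        (SimpleGraph.induce {u | p ∈ {r : V × Fin τ | r.1 ∈ d.bags u}} d.T).Connected) ∧
    (⨆ u, (({q : V × Fin τ | q.1 ∈ d.bags u} : Set (V × Fin τ)).encard - 1)) =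
      (d.width + 1) * (τ : ℕ∞) - 1 := by
  have hadj := fst_eq_or_underlying_adj_of_expansion_adj layers
  let e := d.comap Prod.fst hadj
  refine ⟨e.bags_cover, fun _ _ h => e.bags_edge h, e.bags_subtree, ?_⟩
  exact (d.width_comap_fst hadj).trans (by simp)

/-- replacing each vertex in each bag of a tree decomposition of the
underlying graph by all of its `τ` appearances yields a tree decomposition of the
undirected static expansion, of width `(width + 1)·τ − 1`. -/
theorem blowup_is_tree_decomposition_of_expansion {V : Type} [Nonempty V] {τ : ℕ}
    (hτ : 1 ≤ τ) (layers : Fin τ → SimpleGraph V)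
    (d : TreeDecomp (underlying layers)) :
    (∀ p : V × Fin τ, ∃ u, p ∈ {q : V × Fin τ | q.1 ∈ d.bags u}) ∧
    (∀ p q : V × Fin τ, (expansion layers).Adj p q →
        ∃ u, p ∈ {r : V × Fin τ | r.1 ∈ d.bags u} ∧ q ∈ {r : V × Fin τ | r.1 ∈ d.bags u}) ∧
    (∀ p : V × Fin τ,
        (SimpleGraph.induce {u | p ∈ {r : V × Fin τ | r.1 ∈ d.bags u}} d.T).Connected) ∧
    (⨆ u, (({q : V × Fin τ | q.1 ∈ d.bags u} : Set (V × Fin τ)).encard - 1)) =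
      (d.width + 1) * (τ : ℕ∞) - 1 :=
  blowup_is_tree_decomposition_of_expansion_general layers d
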